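/- arXiv:1007.3074 — 2 statements merged into one kernel-verified Lean document; each statement's English description precedes it below -/
import Mathlib

section
/- For all real t with 0 < t ≤ 1, one has |Y_0(t) − (2/π) log t| ≤ (2/π)(log 2 − γ + 1/4), where Y_0 is the Bessel function of the second kind of order zero and γ is Euler's constant. -/
open Real

/-- The Bessel function of the first kind of order zero, defined by its power series. -/
noncomputable def besselJ0 (t : ℝ) : ℝ :=
  ∑' m : ℕ, (-1 : ℝ) ^ m * (t / 2) ^ (2 * m) / ((Nat.factorial m : ℝ)) ^ 2

/-- Partial harmonic sum `h_m = ∑_{j=1}^m 1/j`. -/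
noncomputable def harmonicSum (m : ℕ) : ℝ :=
  ∑ j ∈ Finset.range m, (1 : ℝ) / (j + 1)

/-- The Bessel function of the second kind of order zero, defined by its power series:
`Y₀(t) = (2/π)(log(t/2) + γ)J₀(t) + (2/π)∑_{m≥1}(−1)^{m+1} h_m (t/2)^{2m}/(m!)²`. -/
noncomputable def besselY0 (t : ℝ) : ℝ :=
  (2 / π) * (Real.log (t / 2) + Real.eulerMascheroniConstant) * besselJ0 t +
    (2 / π) * ∑' m : ℕ, (-1 : ℝ) ^ m * harmonicSum (m + 1) * (t / 2) ^ (2 * (m + 1)) /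
      ((Nat.factorial (m + 1) : ℝ)) ^ 2

/-!
Put `x = (t/2)² ≤ 1/4`, `J = J₀(t)`, `S` the harmonic series in `Y₀`, and `c = log 2 - γ`.
Past their leading terms both series are dominated by geometric series of ratio `1/4`, so
`|J - (1 - x)| ≤ x²/3` and `|S - x| ≤ 2x²/3`. Now
`(π/2) Y₀(t) - log t = -log t · (1 - J) - c J + S`, where `0 ≤ -log t · (1 - J) ≤ (13/12)(-x log t)`
and `-x log t ≤ 1/16` (from `2u ≤ eᵘ`), while `c > 1/12` (from `γ < H₁₆ - log 16`);
so the sum lies in `[-c, c + 1/4]`.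
-/

open Finset
open scoped Nat

lemma abs_tsum_sub_sum_range_le {f : ℕ → ℝ} {n : ℕ} {C r : ℝ} (hr0 : 0 ≤ r) (hr1 : r < 1)
    (hf : ∀ k, |f (k + n)| ≤ C * r ^ k) :
    |∑' m, f m - ∑ m ∈ range n, f m| ≤ C / (1 - r) := by
  have hg := (hasSum_geometric_of_lt_one hr0 hr1).mul_left C
  have hsum : Summable f := (summable_nat_add_iff n).1 (.of_norm_bounded hg.summable hf)
  rw [← hsum.sum_add_tsum_nat_add n, add_sub_cancel_left, div_eq_mul_inv]
  exact tsum_of_norm_bounded (f := fun k => f (k + n)) hg hf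

lemma neg_log_mul_sq_le (t : ℝ) : -log t * t ^ 2 ≤ 1 / 4 := by
  rcases eq_or_ne t 0 with rfl | ht
  · norm_num
  have ht2 : 0 < t ^ 2 := by positivity
  have h := two_mul_le_exp (x := -log (t ^ 2))
  rw [exp_neg, exp_log ht2, Real.log_pow, ← one_div, le_div_iff₀ ht2] at h
  push_cast at h
  linarith

lemma one_div_twelve_lt_log_two_sub_eulerMascheroniConstant :
    1 / 12 < log 2 - eulerMascheroniConstant := by
  have hseq : eulerMascheroniSeq' 16 = 2436559 / 720720 - 4 * log 2 := by
    rw [eulerMascheroniSeq', if_neg (by norm_num), show ((16 : ℕ) : ℝ) = 2 ^ 4 by norm_num,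
      Real.log_pow]
    norm_num [harmonic, sum_range_succ]
  linarith [eulerMascheroniConstant_lt_eulerMascheroniSeq' 16, log_two_gt_d9]

lemma harmonicSum_nonneg (n : ℕ) : 0 ≤ harmonicSum n :=
  sum_nonneg fun _ _ => by positivity

lemma harmonicSum_le (n : ℕ) : harmonicSum n ≤ n := by
  calc harmonicSum n ≤ ∑ _j ∈ range n, (1 : ℝ) :=
        sum_le_sum fun j _ =>
          div_le_one_of_le₀ (by linarith [j.cast_nonneg (α := ℝ)]) (by positivity)
    _ = n := by simp

noncomputable def besselY0Series (t : ℝ) : ℝ :=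
  ∑' m : ℕ, (-1 : ℝ) ^ m * harmonicSum (m + 1) * (t / 2) ^ (2 * (m + 1)) / ((m + 1)! : ℝ) ^ 2

lemma besselY0_eq (t : ℝ) : besselY0 t =
    2 / π * ((log (t / 2) + eulerMascheroniConstant) * besselJ0 t + besselY0Series t) := by
  rw [besselY0, besselY0Series]; ring

lemma div_two_sq_le_one_div_four {t : ℝ} (ht : |t| ≤ 1) : (t / 2) ^ 2 ≤ 1 / 4 := by
  nlinarith [sq_le_one_iff_abs_le_one t |>.2 ht]

lemma two_le_factorial_add_two (k : ℕ) : (2 : ℝ) ≤ (k + 2)! := by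
  exact_mod_cast Nat.factorial_le (Nat.le_add_left 2 k)

lemma abs_besselJ0_sub_le {t : ℝ} (ht : |t| ≤ 1) :
    |besselJ0 t - (1 - (t / 2) ^ 2)| ≤ ((t / 2) ^ 2) ^ 2 / 3 := by
  have hx1 := div_two_sq_le_one_div_four ht
  set x := (t / 2) ^ 2
  have hx0 : 0 ≤ x := sq_nonneg _
  set f : ℕ → ℝ := fun m => (-1) ^ m * x ^ m / (m ! : ℝ) ^ 2
  have hJ : besselJ0 t = ∑' m, f m := tsum_congr fun m => by rw [pow_mul]
  have hhead : ∑ m ∈ range 2, f m = 1 - x := by norm_num [f, sum_range_succ]; ring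
  have hterm (k : ℕ) : |f (k + 2)| ≤ x ^ 2 / 4 * (1 / 4) ^ k := by
    have h2 := two_le_factorial_add_two k
    rw [abs_div, abs_mul, abs_pow, abs_neg, abs_one, one_pow, one_mul,
      abs_of_nonneg (by positivity), abs_of_nonneg (by positivity)]
    calc x ^ (k + 2) / ((k + 2)! : ℝ) ^ 2 ≤ x ^ (k + 2) / 2 ^ 2 := by gcongr
      _ = x ^ 2 / 4 * x ^ k := by ring
      _ ≤ x ^ 2 / 4 * (1 / 4) ^ k := by gcongr
  rw [hJ, ← hhead]
  calc _ ≤ x ^ 2 / 4 / (1 - 1 / 4) := abs_tsum_sub_sum_range_le (by norm_num) (by norm_num) hterm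
    _ = x ^ 2 / 3 := by ring

lemma abs_besselY0Series_sub_le {t : ℝ} (ht : |t| ≤ 1) :
    |besselY0Series t - (t / 2) ^ 2| ≤ 2 * ((t / 2) ^ 2) ^ 2 / 3 := by
  have hx1 := div_two_sq_le_one_div_four ht
  set x := (t / 2) ^ 2
  have hx0 : 0 ≤ x := sq_nonneg _
  set g : ℕ → ℝ := fun m => (-1) ^ m * harmonicSum (m + 1) * x ^ (m + 1) / ((m + 1)! : ℝ) ^ 2
  have hS : besselY0Series t = ∑' m, g m := tsum_congr fun m => by rw [pow_mul]
  have hhead : ∑ m ∈ range 1, g m = x := by simp [g, harmonicSum]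
  have hterm (k : ℕ) : |g (k + 1)| ≤ x ^ 2 / 2 * (1 / 4) ^ k := by
    have h2 := two_le_factorial_add_two k
    have hh : harmonicSum (k + 2) ≤ (k + 2)! :=
      (harmonicSum_le _).trans (mod_cast Nat.self_le_factorial _)
    rw [abs_div, abs_mul, abs_mul, abs_pow, abs_neg, abs_one, one_pow, one_mul,
      abs_of_nonneg (harmonicSum_nonneg _), abs_of_nonneg (by positivity),
      abs_of_nonneg (by positivity)]
    calc harmonicSum (k + 2) * x ^ (k + 2) / ((k + 2)! : ℝ) ^ 2
        ≤ (k + 2)! * x ^ (k + 2) / ((k + 2)! : ℝ) ^ 2 := by gcongr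
      _ = x ^ (k + 2) / (k + 2)! := by field_simp
      _ ≤ x ^ (k + 2) / 2 := by gcongr
      _ = x ^ 2 / 2 * x ^ k := by ring
      _ ≤ x ^ 2 / 2 * (1 / 4) ^ k := by gcongr
  rw [hS]
  nth_rewrite 1 [← hhead]
  calc _ ≤ x ^ 2 / 2 / (1 - 1 / 4) := abs_tsum_sub_sum_range_le (by norm_num) (by norm_num) hterm
    _ = 2 * x ^ 2 / 3 := by ring

lemma abs_sub_mul_add_sub_le {x L J S c : ℝ} (hx0 : 0 ≤ x) (hx1 : x ≤ 1 / 4) (hL : L ≤ 0)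
    (hLx : -L * x ≤ 1 / 16) (hc : 1 / 12 ≤ c) (hJ : |J - (1 - x)| ≤ x ^ 2 / 3)
    (hS : |S - x| ≤ 2 * x ^ 2 / 3) :
    |(L - c) * J + S - L| ≤ c + 1 / 4 := by
  obtain ⟨hJlo, hJhi⟩ := abs_le.1 hJ
  obtain ⟨hSlo, hShi⟩ := abs_le.1 hS
  have hx2 : x ^ 2 ≤ x / 4 := by nlinarith
  have hJ1 : J ≤ 1 := by linarith
  have hJ2 : 1 - J ≤ 13 / 12 * x := by linarith
  have hS0 : 0 ≤ S := by linarith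
  have hregroup : (L - c) * J + S - L = -L * (1 - J) - c * J + S := by ring
  rw [hregroup, abs_le]
  constructor
  · nlinarith [mul_nonneg (neg_nonneg.2 hL) (sub_nonneg.2 hJ1)]
  · nlinarith [mul_le_mul_of_nonneg_left hJ2 (neg_nonneg.2 hL)]

/-- For `0 < t ≤ 1`, `|Y₀(t) − (2/π) log t| ≤ (2/π)(log 2 − γ + 1/4)`. -/
theorem besselY0_log_bound (t : ℝ) (ht0 : 0 < t) (ht1 : t ≤ 1) :
    |besselY0 t - (2 / π) * Real.log t| ≤
      (2 / π) * (Real.log 2 - Real.eulerMascheroniConstant + 1 / 4) := by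
  have ht : |t| ≤ 1 := abs_le.2 ⟨by linarith, ht1⟩
  have hLx : -log t * (t / 2) ^ 2 ≤ 1 / 16 := by linarith [neg_log_mul_sq_le t]
  have hbound := abs_sub_mul_add_sub_le (sq_nonneg _) (div_two_sq_le_one_div_four ht)
    (log_nonpos ht0.le ht1) hLx one_div_twelve_lt_log_two_sub_eulerMascheroniConstant.le
    (abs_besselJ0_sub_le ht) (abs_besselY0Series_sub_le ht)
  have hY : besselY0 t - 2 / π * log t = 2 / π * ((log t - (log 2 - eulerMascheroniConstant)) *
      besselJ0 t + besselY0Series t - log t) := by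
    rw [besselY0_eq, log_div ht0.ne' two_ne_zero]; ring
  rw [hY, abs_mul, abs_of_pos (by positivity)]
  gcongr
end

section
/- Suppose p ∈ BC(ℝ) satisfies p(s) ≤ −c² < 0 for all s ∈ ℝ, g ∈ BC(ℝ), v ∈ BC²(ℝ), and v''(s) + p(s)v(s) = g(s) for all s ∈ ℝ. Then for every 0 < β < c and α ≥ 0, with weight w_{β,α}(s) = exp(−β√(α² + s²)), one has (∫_ℝ (w_{β,α} v)² ds)^{1/2} ≤ (c² − β²)⁻¹ (∫_ℝ (w_{β,α} g)² ds)^{1/2}. -/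
/-!
Multiply the equation by `w² v` and integrate. Since `(w² v v')'` integrates to zero,
`∫ w² v v'' = -∫ (2 w w' v v' + w² v'²)`, and `|w'| ≤ β w` bounds this from above by
`β² ∫ (w v)²`; with `p ≤ -c²` this gives `(c² - β²) ‖w v‖² ≤ -∫ (w v) (w g)`. Young's inequality
with weight `k = c² - β²` absorbs half of `‖w v‖²` and leaves `k² ‖w v‖² ≤ ‖w g‖²`.
For `α = 0` the weight is `exp (-β |s|)`, which is not differentiable at the origin, so the
integration by parts is done on both half-lines.
-/

open MeasureTheory Real Filter Set Topology

theorem integral_eq_zero_of_hasDerivAt_off_of_integrable {E : Type*} [NormedAddCommGroup E]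
    [NormedSpace ℝ E] [CompleteSpace E] {f f' : ℝ → E} {a : ℝ} (hcont : ContinuousAt f a)
    (hderiv : ∀ x ≠ a, HasDerivAt f (f' x) x) (hf' : Integrable f') (hf : Integrable f) :
    ∫ x, f' x = 0 := by
  have hbot : Tendsto f atBot (𝓝 0) :=
    tendsto_zero_of_hasDerivAt_of_integrableOn_Iic (a := a - 1)
      (fun x hx => hderiv x (by linarith [hx.out])) hf'.integrableOn hf.integrableOn
  have htop : Tendsto f atTop (𝓝 0) :=
    tendsto_zero_of_hasDerivAt_of_integrableOn_Ioi (a := a)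
      (fun x hx => hderiv x hx.out.ne') hf'.integrableOn hf.integrableOn
  rw [← intervalIntegral.integral_Iic_add_Ioi hf'.integrableOn hf'.integrableOn,
    integral_Iic_of_hasDerivAt_of_tendsto hcont.continuousWithinAt
      (fun x hx => hderiv x hx.out.ne) hf'.integrableOn hbot,
    integral_Ioi_of_hasDerivAt_of_tendsto hcont.continuousWithinAt
      (fun x hx => hderiv x hx.out.ne') hf'.integrableOn htop]
  abel

theorem integrable_exp_neg_mul_abs {b : ℝ} (hb : 0 < b) :
    Integrable fun x : ℝ => exp (-b * |x|) := by
  have hIoi : IntegrableOn (fun x : ℝ => exp (-b * |x|)) (Ioi 0) :=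
    (exp_neg_integrableOn_Ioi 0 hb).congr_fun (fun x hx => by rw [abs_of_pos hx])
      measurableSet_Ioi
  have hIio : IntegrableOn (fun x : ℝ => exp (-b * |x|)) (Iio 0) := by
    simpa using hIoi.comp_neg
  rw [← integrableOn_univ, ← Iio_union_Ici (a := (0 : ℝ)), integrableOn_union]
  exact ⟨hIio, (integrableOn_Ici_iff_integrableOn_Ioi).mpr hIoi⟩

theorem sqrt_integral_sq_le_of_le_neg_integral_mul {α : Type*} [MeasurableSpace α]
    {μ : Measure α} {f h : α → ℝ} {k : ℝ} (hk : 0 < k) (hf : MemLp f 2 μ) (hh : MemLp h 2 μ)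
    (hfh : k * ∫ x, f x ^ 2 ∂μ ≤ -∫ x, f x * h x ∂μ) :
    √(∫ x, f x ^ 2 ∂μ) ≤ k⁻¹ * √(∫ x, h x ^ 2 ∂μ) := by
  have hyoung : -∫ x, f x * h x ∂μ ≤
      k / 2 * ∫ x, f x ^ 2 ∂μ + (2 * k)⁻¹ * ∫ x, h x ^ 2 ∂μ := by
    rw [← integral_neg, ← integral_const_mul, ← integral_const_mul,
      ← integral_add (hf.integrable_sq.const_mul _) (hh.integrable_sq.const_mul _)]
    refine integral_mono (hf.integrable_mul hh).neg
      ((hf.integrable_sq.const_mul _).add (hh.integrable_sq.const_mul _)) fun x => ?_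
    have : 0 ≤ (2 * k)⁻¹ * (k * f x + h x) ^ 2 := by positivity
    field_simp at this ⊢
    nlinarith [this]
  have hI : ∫ x, f x ^ 2 ∂μ ≤ k⁻¹ ^ 2 * ∫ x, h x ^ 2 ∂μ := by
    have := mul_le_mul_of_nonneg_left (hfh.trans hyoung) (by positivity : 0 ≤ 2 * k⁻¹)
    field_simp at this ⊢
    linarith
  calc √(∫ x, f x ^ 2 ∂μ) ≤ √(k⁻¹ ^ 2 * ∫ x, h x ^ 2 ∂μ) := sqrt_le_sqrt hI
    _ = k⁻¹ * √(∫ x, h x ^ 2 ∂μ) := by rw [sqrt_mul (by positivity), sqrt_sq (by positivity)]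

/-- The first two terms on the right are the derivative of `w² a a'`, and `a'' + q a` plays the
role of the right-hand side `g` of the equation. -/
theorem agmon_pointwise_le {w w' a a' a'' q β c : ℝ} (hw' : |w'| ≤ β * |w|)
    (hq : q ≤ -c ^ 2) :
    (c ^ 2 - β ^ 2) * (w * a) ^ 2 ≤
      w * w' * (2 * (a * a')) + w * w * (a' * a' + a * a'') - w * a * (w * (a'' + q * a)) := by
  have hcross : -(w * w' * (2 * (a * a'))) ≤ 2 * β * |w| ^ 2 * |a| * |a'| := by
    have : |w * w' * (2 * (a * a'))| = 2 * |w| * |w'| * |a| * |a'| := by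
      simp only [abs_mul, abs_two]; ring
    nlinarith [neg_le_abs (w * w' * (2 * (a * a'))), abs_nonneg w, abs_nonneg a, abs_nonneg a',
      mul_nonneg (mul_nonneg (abs_nonneg w) (abs_nonneg a)) (abs_nonneg a')]
  have hsq : w ^ 2 * a' ^ 2 + β ^ 2 * (w * a) ^ 2 - 2 * β * |w| ^ 2 * |a| * |a'| =
      w ^ 2 * (|a'| - β * |a|) ^ 2 := by
    rw [mul_pow, ← sq_abs a, ← sq_abs a', sq_abs w]; ring
  nlinarith [mul_le_mul_of_nonneg_right hq (sq_nonneg (w * a)),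
    mul_nonneg (sq_nonneg w) (sq_nonneg (|a'| - β * |a|))]

theorem agmon_energy_le {W p g v : ℝ → ℝ} {β c : ℝ} (hWc : Continuous W) (hW : MemLp W 2)
    (hWd : ∀ s ≠ 0, DifferentiableAt ℝ W s) (hW' : ∀ᵐ s, |deriv W s| ≤ β * |W s|)
    (hv : ContDiff ℝ 2 v) (hv0 : MemLp v ⊤) (hv1 : MemLp (deriv v) ⊤)
    (hv2 : MemLp (deriv (deriv v)) ⊤) (hg : MemLp g ⊤) (hp_neg : ∀ s, p s ≤ -c ^ 2)
    (hode : ∀ s, deriv (deriv v) s + p s * v s = g s) :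
    (c ^ 2 - β ^ 2) * ∫ s, (W s * v s) ^ 2 ≤ -∫ s, W s * v s * (W s * g s) := by
  have hvd : Differentiable ℝ v := hv.differentiable two_ne_zero
  have hv1d : Differentiable ℝ (deriv v) := (hv.iterate_deriv' 1 1).differentiable one_ne_zero
  have hW'2 : MemLp (deriv W) 2 :=
    (hW.const_mul β).of_le (measurable_deriv W).aestronglyMeasurable <| hW'.mono fun s hs => by
      simpa [abs_mul] using hs.trans (mul_le_mul_of_nonneg_right (le_abs_self β) (abs_nonneg _))
  have hWv : MemLp (fun s => W s * v s) 2 := hv0.mul hW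
  have hWg : MemLp (fun s => W s * g s) 2 := hg.mul hW
  have hWvWg : Integrable fun s => W s * v s * (W s * g s) := hWv.integrable_mul hWg
  set F : ℝ → ℝ := fun s => W s * W s * (v s * deriv v s)
  set F' : ℝ → ℝ := fun s => W s * deriv W s * (2 * (v s * deriv v s)) +
    W s * W s * (deriv v s * deriv v s + v s * deriv (deriv v) s)
  have hF : ∀ s ≠ 0, HasDerivAt F (F' s) s := fun s hs => by
    have hWs := (hWd s hs).hasDerivAt
    exact ((hWs.mul hWs).mul ((hvd s).hasDerivAt.mul (hv1d s).hasDerivAt)).congr_deriv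
      (by simp only [F', Pi.mul_apply]; ring)
  have hF'int : Integrable F' :=
    ((hW.integrable_mul hW'2).mul_of_top_left ((hv1.mul hv0).const_mul 2)).add
      ((hW.integrable_mul hW).mul_of_top_left ((hv1.mul hv1).add (hv2.mul hv0)))
  have hF0 : ∫ s, F' s = 0 :=
    integral_eq_zero_of_hasDerivAt_off_of_integrable
      ((hWc.mul hWc).mul (hvd.continuous.mul hv1d.continuous)).continuousAt hF hF'int
      ((hW.integrable_mul hW).mul_of_top_left (hv1.mul hv0))
  have hpt : ∀ᵐ s, (c ^ 2 - β ^ 2) * (W s * v s) ^ 2 ≤ F' s - W s * v s * (W s * g s) :=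
    hW'.mono fun s hs => by rw [← hode s]; exact agmon_pointwise_le hs (hp_neg s)
  calc (c ^ 2 - β ^ 2) * ∫ s, (W s * v s) ^ 2
      = ∫ s, (c ^ 2 - β ^ 2) * (W s * v s) ^ 2 := (integral_const_mul _ _).symm
    _ ≤ ∫ s, (F' s - W s * v s * (W s * g s)) :=
        integral_mono_ae (hWv.integrable_sq.const_mul _) (hF'int.sub hWvWg) hpt
    _ = -∫ s, W s * v s * (W s * g s) := by rw [integral_sub hF'int hWvWg, hF0, zero_sub]

noncomputable def agmonWeight (β α s : ℝ) : ℝ := exp (-β * √(α ^ 2 + s ^ 2))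

theorem continuous_agmonWeight (β α : ℝ) : Continuous (agmonWeight β α) := by
  unfold agmonWeight; fun_prop

theorem agmonWeight_sq (β α s : ℝ) : agmonWeight β α s ^ 2 = agmonWeight (2 * β) α s := by
  rw [agmonWeight, agmonWeight, ← exp_nat_mul]; ring_nf

theorem abs_le_sqrt_sq_add_sq (α s : ℝ) : |s| ≤ √(α ^ 2 + s ^ 2) := by
  rw [← sqrt_sq_eq_abs]; exact sqrt_le_sqrt (by nlinarith [sq_nonneg α])

theorem agmonWeight_le_exp_neg_mul_abs {β : ℝ} (hβ : 0 ≤ β) (α s : ℝ) :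
    agmonWeight β α s ≤ exp (-β * |s|) :=
  exp_le_exp.mpr (by nlinarith [abs_le_sqrt_sq_add_sq α s])

theorem memLp_agmonWeight {β : ℝ} (hβ : 0 < β) (α : ℝ) : MemLp (agmonWeight β α) 2 := by
  rw [memLp_two_iff_integrable_sq (continuous_agmonWeight β α).aestronglyMeasurable]
  refine (integrable_exp_neg_mul_abs (by positivity : 0 < 2 * β)).mono'
    ((continuous_agmonWeight β α).pow 2).aestronglyMeasurable (ae_of_all _ fun s => ?_)
  rw [norm_pow, Real.norm_eq_abs, sq_abs, agmonWeight_sq]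
  exact agmonWeight_le_exp_neg_mul_abs (by positivity) α s

theorem hasDerivAt_agmonWeight (β α : ℝ) {s : ℝ} (hs : s ≠ 0) :
    HasDerivAt (agmonWeight β α) (agmonWeight β α s * (-β * (s / √(α ^ 2 + s ^ 2)))) s := by
  have hpos : 0 < α ^ 2 + s ^ 2 := by positivity
  have hsqrt : HasDerivAt (fun t => √(α ^ 2 + t ^ 2)) (s / √(α ^ 2 + s ^ 2)) s := by
    convert ((hasDerivAt_pow 2 s).const_add (α ^ 2)).sqrt hpos.ne' using 1
    field_simp; ring
  exact (hsqrt.const_mul (-β)).exp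

theorem abs_deriv_agmonWeight_le {β : ℝ} (hβ : 0 ≤ β) (α : ℝ) {s : ℝ} (hs : s ≠ 0) :
    |deriv (agmonWeight β α) s| ≤ β * |agmonWeight β α s| := by
  have hpos : 0 < √(α ^ 2 + s ^ 2) := sqrt_pos.mpr (by positivity)
  have hle : |s / √(α ^ 2 + s ^ 2)| ≤ 1 := by
    rw [abs_div, abs_of_pos hpos, div_le_one hpos]
    exact abs_le_sqrt_sq_add_sq α s
  rw [(hasDerivAt_agmonWeight β α hs).deriv, abs_mul, abs_mul, abs_neg, abs_of_nonneg hβ,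
    mul_comm]
  exact mul_le_mul_of_nonneg_right (mul_le_of_le_one_right hβ hle) (abs_nonneg _)

theorem agmon_weighted_estimate_general
    (p g v : ℝ → ℝ) (c β α : ℝ)
    (hβ0 : 0 < β) (hβc : β < c)
    (hp_neg : ∀ s, p s ≤ -c ^ 2)
    (hg_cont : Continuous g) (hg_bdd : ∃ Cg, ∀ s, |g s| ≤ Cg)
    (hv : ContDiff ℝ 2 v)
    (hv_bdd : ∃ Cv, ∀ s, |v s| ≤ Cv ∧ |deriv v s| ≤ Cv ∧ |deriv (deriv v) s| ≤ Cv)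
    (hode : ∀ s, deriv (deriv v) s + p s * v s = g s) :
    Real.sqrt (∫ s : ℝ, (Real.exp (-β * Real.sqrt (α ^ 2 + s ^ 2)) * v s) ^ 2) ≤
      (c ^ 2 - β ^ 2)⁻¹ *
        Real.sqrt (∫ s : ℝ, (Real.exp (-β * Real.sqrt (α ^ 2 + s ^ 2)) * g s) ^ 2) := by
  obtain ⟨Cv, hCv⟩ := hv_bdd
  obtain ⟨Cg, hCg⟩ := hg_bdd
  have hk : 0 < c ^ 2 - β ^ 2 := by nlinarith
  have hW := memLp_agmonWeight hβ0 α
  have hne : ∀ᵐ s : ℝ, s ≠ 0 := compl_mem_ae_iff.mpr (measure_singleton 0)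
  have hW' : ∀ᵐ s, |deriv (agmonWeight β α) s| ≤ β * |agmonWeight β α s| :=
    hne.mono fun s hs => abs_deriv_agmonWeight_le hβ0.le α hs
  have hv0 : MemLp v ⊤ :=
    memLp_top_of_bound hv.continuous.aestronglyMeasurable Cv (ae_of_all _ fun s => (hCv s).1)
  have hv1 : MemLp (deriv v) ⊤ := memLp_top_of_bound (measurable_deriv v).aestronglyMeasurable
    Cv (ae_of_all _ fun s => (hCv s).2.1)
  have hv2 : MemLp (deriv (deriv v)) ⊤ := memLp_top_of_bound
    (measurable_deriv _).aestronglyMeasurable Cv (ae_of_all _ fun s => (hCv s).2.2)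
  have hg : MemLp g ⊤ :=
    memLp_top_of_bound hg_cont.aestronglyMeasurable Cg (ae_of_all _ hCg)
  exact sqrt_integral_sq_le_of_le_neg_integral_mul hk (hv0.mul hW) (hg.mul hW)
    (agmon_energy_le (continuous_agmonWeight β α) hW
      (fun s hs => (hasDerivAt_agmonWeight β α hs).differentiableAt) hW' hv hv0 hv1 hv2 hg
      hp_neg hode)

/-- Agmon-type weighted estimate (Lemma A.1): if `p ∈ BC(ℝ)` with `p ≤ −c² < 0`,
`g ∈ BC(ℝ)`, `v ∈ BC²(ℝ)` and `v'' + p v = g`, then for `0 < β < c` and `α ≥ 0`, with the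
weight `w(s) = exp(−β√(α² + s²))`, one has `‖w v‖_{L²} ≤ (c² − β²)⁻¹ ‖w g‖_{L²}`. -/
theorem agmon_weighted_estimate
    (p g v : ℝ → ℝ) (c β α : ℝ)
    (hc : 0 < c) (hβ0 : 0 < β) (hβc : β < c) (hα : 0 ≤ α)
    (hp_cont : Continuous p) (hp_bdd : ∃ Cp, ∀ s, |p s| ≤ Cp)
    (hp_neg : ∀ s, p s ≤ -c ^ 2)
    (hg_cont : Continuous g) (hg_bdd : ∃ Cg, ∀ s, |g s| ≤ Cg)
    (hv : ContDiff ℝ 2 v)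
    (hv_bdd : ∃ Cv, ∀ s, |v s| ≤ Cv ∧ |deriv v s| ≤ Cv ∧ |deriv (deriv v) s| ≤ Cv)
    (hode : ∀ s, deriv (deriv v) s + p s * v s = g s) :
    Real.sqrt (∫ s : ℝ, (Real.exp (-β * Real.sqrt (α ^ 2 + s ^ 2)) * v s) ^ 2) ≤
      (c ^ 2 - β ^ 2)⁻¹ *
        Real.sqrt (∫ s : ℝ, (Real.exp (-β * Real.sqrt (α ^ 2 + s ^ 2)) * g s) ^ 2) :=
  agmon_weighted_estimate_general p g v c β α hβ0 hβc hp_neg hg_cont hg_bdd hv hv_bdd hode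
end
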